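/- In the k-state game with k ≥ 2, let 1 ≤ t ≤ 2^{k−1}. The pure profile (1^k, bin_k(t−1)) has Nash gap exactly 2/k in the full game: V(1^k, bin_k(t−1)) = 1 − 2/k, the maximum of V(x, bin_k(t−1)) over all x ∈ {0,1}^k equals 1 (attained, e.g., at x = bin_k(t−1)), and the minimum of V(1^k, y) over all y ∈ {0,1}^k equals 1 − 2/k. -/

import Mathlib

open Finset

namespace KState

/-- Matching pennies payoff: `1` if `a = b`, `-1` otherwise. -/
noncomputable def m (a b : Fin 2) : ℝ := if a = b then 1 else -1

/-- Payoff at a non-matching-pennies state: `-1` if `(a, b) = (0, 1)`, `1` otherwise. -/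
noncomputable def w (a b : Fin 2) : ℝ := if a = 0 ∧ b = 1 then -1 else 1

/-- Player 1's payoff in the `k`-state game:
`V x y = (1/k) (m x₁ y₁ + ∑_{j=2}^k w x_j y_j)`, where coordinate `1` corresponds to the
index `j = 0` of `Fin k`. Player 2's payoff is `-V x y`. -/
noncomputable def V (k : ℕ) (x y : Fin k → Fin 2) : ℝ :=
  (1 / (k : ℝ)) * ∑ j : Fin k, (if j.val = 0 then m (x j) (y j) else w (x j) (y j))

/-- The all-ones pure strategy `(1, 1, …, 1)`. -/
def ones (k : ℕ) : Fin k → Fin 2 := fun _ => 1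

/-- The `k`-bit binary representation of `s`, most significant bit first: the index
`j = 0` of `Fin k` holds the coefficient of `2^(k-1)`. -/
def bin (k s : ℕ) : Fin k → Fin 2 :=
  fun j => ⟨s / 2 ^ (k - 1 - j.val) % 2, Nat.mod_lt _ (by norm_num)⟩

lemma m_le (a b : Fin 2) : m a b ≤ 1 := by unfold m; split <;> norm_num

lemma neg_one_le_m (a b : Fin 2) : -1 ≤ m a b := by unfold m; split <;> norm_num

lemma w_le (a b : Fin 2) : w a b ≤ 1 := by unfold w; split <;> norm_num

lemma m_self (a : Fin 2) : m a a = 1 := by simp [m]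

lemma w_self (a : Fin 2) : w a a = 1 := by fin_cases a <;> simp [w]

lemma w_one (b : Fin 2) : w 1 b = 1 := by
  unfold w
  rw [if_neg]
  rintro ⟨h, -⟩
  exact absurd h (by decide)

lemma m_one_zero : m 1 0 = -1 := by
  unfold m
  rw [if_neg (by decide)]

lemma sum_if (n : ℕ) (f : Fin (n + 1) → ℝ)
    (hd : ∀ j : Fin (n + 1), j.val ≠ 0 → f j = 1) :
    ∑ j, f j = f 0 + n := by
  rw [Fin.sum_univ_succ]
  congr 1
  rw [Finset.sum_congr rfl (fun i _ => hd i.succ (by simp [Fin.val_succ]))]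
  simp

/-- In the `k`-state game with `1 ≤ t ≤ 2^(k-1)`, the pure profile `(1ᵏ, bin k (t-1))`
has Nash gap exactly `2/k` in the full game: `V 1ᵏ (bin k (t-1)) = 1 - 2/k`, the
maximum of `V x (bin k (t-1))` over all `x` equals `1` (attained at `x = bin k (t-1)`),
and the minimum of `V 1ᵏ y` over all `y` equals `1 - 2/k`. -/
theorem kstate_nash_gap (k t : ℕ) (hk : 2 ≤ k) (ht1 : 1 ≤ t) (ht2 : t ≤ 2 ^ (k - 1)) :
    V k (ones k) (bin k (t - 1)) = 1 - 2 / k ∧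
    (∀ x : Fin k → Fin 2, V k x (bin k (t - 1)) ≤ 1) ∧
    V k (bin k (t - 1)) (bin k (t - 1)) = 1 ∧
    (∀ y : Fin k → Fin 2, 1 - 2 / k ≤ V k (ones k) y) ∧
    (∃ y : Fin k → Fin 2, V k (ones k) y = 1 - 2 / k) := by
  obtain ⟨n, rfl⟩ : ∃ n, k = n + 1 := ⟨k - 1, by omega⟩
  have hkR : (0 : ℝ) < (n + 1 : ℕ) := by positivity
  have hkne : ((n + 1 : ℕ) : ℝ) ≠ 0 := ne_of_gt hkR
  -- the most significant bit of bin (n+1) (t-1) is 0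
  have hb0 : bin (n + 1) (t - 1) 0 = 0 := by
    apply Fin.ext
    show (t - 1) / 2 ^ (n + 1 - 1 - (0 : Fin (n + 1)).val) % 2 = 0
    have : (t - 1) / 2 ^ n = 0 := Nat.div_eq_of_lt (by
      have : 2 ^ (n + 1 - 1) = 2 ^ n := by norm_num
      omega)
    simp [this]
  -- first claim
  have h1 : V (n + 1) (ones (n + 1)) (bin (n + 1) (t - 1)) = 1 - 2 / (n + 1 : ℕ) := by
    unfold V
    rw [sum_if n _ (fun j hj => by rw [if_neg hj]; exact w_one _)]
    rw [if_pos (Fin.val_zero _)]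
    show (1 / _) * (m 1 (bin (n+1) (t-1) 0) + _) = _
    rw [hb0, m_one_zero]
    field_simp
    push_cast
    ring
  refine ⟨h1, ?_, ?_, ?_, ⟨bin (n + 1) (t - 1), h1⟩⟩
  · intro x
    unfold V
    have hsum : ∑ j : Fin (n + 1),
        (if j.val = 0 then m (x j) (bin (n+1) (t-1) j) else w (x j) (bin (n+1) (t-1) j))
        ≤ ((n + 1 : ℕ) : ℝ) := by
      calc _ ≤ ∑ _j : Fin (n + 1), (1 : ℝ) :=
            Finset.sum_le_sum (fun j _ => by split; exacts [m_le _ _, w_le _ _])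
        _ = ((n + 1 : ℕ) : ℝ) := by simp
    calc (1 / ((n + 1 : ℕ) : ℝ)) * _ ≤ (1 / ((n + 1 : ℕ) : ℝ)) * ((n + 1 : ℕ) : ℝ) :=
          mul_le_mul_of_nonneg_left hsum (by positivity)
      _ = 1 := one_div_mul_cancel hkne
  · unfold V
    rw [sum_if n _ (fun j hj => by rw [if_neg hj]; exact w_self _)]
    rw [if_pos (Fin.val_zero _), m_self]
    rw [one_div_mul_eq_div]
    rw [div_eq_one_iff_eq hkne]
    push_cast
    ring
  · intro y
    unfold V
    rw [sum_if n _ (fun j hj => by rw [if_neg hj]; exact w_one _)]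
    rw [if_pos (Fin.val_zero _)]
    show _ ≤ (1 / _) * (m 1 (y 0) + (n : ℝ))
    have hm := neg_one_le_m 1 (y 0)
    have h2 : ((n : ℝ) - 1) ≤ m 1 (y 0) + (n : ℝ) := by linarith
    calc (1 : ℝ) - 2 / ((n + 1 : ℕ) : ℝ) = (1 / ((n + 1 : ℕ) : ℝ)) * ((n : ℝ) - 1) := by
          field_simp; push_cast; ring
      _ ≤ _ := mul_le_mul_of_nonneg_left h2 (by positivity)

end KState
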